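/- Let n ≥ 3 and let W be a 2-basic landmark system for HG(n,n,n;3). Then W is a resolving set if and only if W contains neither (F1) a forbidden 4-cycle, i.e., a permutation (i,j,k) of (1,2,3), values a ≠ b in [n], c,d ∈ [n], and four distinct landmarks w₁,w₂,w₃,w₄ with W_{i,a} = {w₁,w₂}, W_{i,b} = {w₃,w₄}, W_{j,c} = {w₂,w₃}, W_{k,d} = {w₁,w₄}; nor (F2) a forbidden 6-cycle, i.e., six distinct landmarks w₁,…,w₆ with (w₁)₁ = (w₂)₁, (w₄)₁ = (w₅)₁, (w₂)₂ = (w₃)₂, (w₅)₂ = (w₆)₂, (w₃)₃ = (w₄)₃, (w₆)₃ = (w₁)₃, and (w₁)₁ ≠ (w₄)₁, (w₂)₂ ≠ (w₅)₂, (w₃)₃ ≠ (w₆)₃. -/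

import Mathlib

/-- The diagonal generalized Hamming graph `HG(n,n,n;3)`: adjacent iff the vertices
differ in all three coordinates. -/
def HG3 (n : ℕ) : SimpleGraph (Fin n × Fin n × Fin n) where
  Adj x y := x.1 ≠ y.1 ∧ x.2.1 ≠ y.2.1 ∧ x.2.2 ≠ y.2.2
  symm := ⟨fun x y h => ⟨h.1.symm, h.2.1.symm, h.2.2.symm⟩⟩
  loopless := ⟨fun x h => h.1 rfl⟩

/-- The `i`-th coordinate of a vertex, `i : Fin 3`. -/
def coord {n : ℕ} (i : Fin 3) (w : Fin n × Fin n × Fin n) : Fin n :=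
  if i = 0 then w.1 else if i = 1 then w.2.1 else w.2.2

/-- The block `W_{i,a}` of landmarks in `W` whose `i`-th coordinate equals `a`. -/
def block {n : ℕ} (W : Set (Fin n × Fin n × Fin n)) (i : Fin 3) (a : Fin n) :
    Set (Fin n × Fin n × Fin n) := {w ∈ W | coord i w = a}

/-- `W` is a resolving set for `HG(n,n,n;3)`. -/
def IsResolving {n : ℕ} (W : Set (Fin n × Fin n × Fin n)) : Prop :=
  ∀ x y : Fin n × Fin n × Fin n, x ∉ W → y ∉ W → x ≠ y →
    ∃ w ∈ W, (HG3 n).dist x w ≠ (HG3 n).dist y w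

/-- `W` is a 2-basic landmark system: every block has exactly two elements, and
blocks of different colors meet in at most one element. -/
def TwoBasic {n : ℕ} (W : Set (Fin n × Fin n × Fin n)) : Prop :=
  (∀ (i : Fin 3) (a : Fin n), (block W i a).ncard = 2) ∧
  (∀ i j : Fin 3, i < j → ∀ a b : Fin n, (block W i a ∩ block W j b).ncard ≤ 1)

/-- (F1) A forbidden 4-cycle: for some permutation `(i,j,k)` of the colors, two
disjoint blocks of color `i` together with a block of color `j` and one of color `k`
form a 4-cycle on four distinct landmarks. -/
def HasF1 {n : ℕ} (W : Set (Fin n × Fin n × Fin n)) : Prop :=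
  ∃ (σ : Equiv.Perm (Fin 3)) (a b c d : Fin n) (w₁ w₂ w₃ w₄ : Fin n × Fin n × Fin n),
    a ≠ b ∧ List.Pairwise (· ≠ ·) [w₁, w₂, w₃, w₄] ∧
    block W (σ 0) a = {w₁, w₂} ∧ block W (σ 0) b = {w₃, w₄} ∧
    block W (σ 1) c = {w₂, w₃} ∧ block W (σ 2) d = {w₁, w₄}

/-- (F2) A forbidden 6-cycle: six distinct landmarks whose consecutive coordinate
agreements follow the color pattern 1,2,3,1,2,3 with opposite edges of equal color. -/
def HasF2 {n : ℕ} (W : Set (Fin n × Fin n × Fin n)) : Prop :=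
  ∃ w₁ w₂ w₃ w₄ w₅ w₆ : Fin n × Fin n × Fin n,
    List.Pairwise (· ≠ ·) [w₁, w₂, w₃, w₄, w₅, w₆] ∧
    w₁ ∈ W ∧ w₂ ∈ W ∧ w₃ ∈ W ∧ w₄ ∈ W ∧ w₅ ∈ W ∧ w₆ ∈ W ∧
    w₁.1 = w₂.1 ∧ w₄.1 = w₅.1 ∧
    w₂.2.1 = w₃.2.1 ∧ w₅.2.1 = w₆.2.1 ∧
    w₃.2.2 = w₄.2.2 ∧ w₆.2.2 = w₁.2.2 ∧
    w₁.1 ≠ w₄.1 ∧ w₂.2.1 ≠ w₅.2.1 ∧ w₃.2.2 ≠ w₆.2.2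

/-- (F3) A rainbow triangle: three distinct landmarks pairwise sharing a coordinate,
one agreement in each coordinate. -/
def HasF3 {n : ℕ} (W : Set (Fin n × Fin n × Fin n)) : Prop :=
  ∃ w₁ w₂ w₃ : Fin n × Fin n × Fin n,
    List.Pairwise (· ≠ ·) [w₁, w₂, w₃] ∧
    w₁ ∈ W ∧ w₂ ∈ W ∧ w₃ ∈ W ∧
    w₁.1 = w₂.1 ∧ w₂.2.1 = w₃.2.1 ∧ w₃.2.2 = w₁.2.2


/-!
For `n ≥ 3`, distinct vertices of `HG(n,n,n;3)` are at distance `1` if they differ in every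
coordinate and at distance `2` otherwise. Hence `W` resolves the graph exactly when distinct
non-landmarks `x` have distinct sets of landmarks sharing a coordinate with them; this set is
the union of the three blocks `W_{i,xᵢ}`. Each forbidden cycle produces two non-landmarks with
the same set. Conversely, if `x ≠ y` are non-landmarks with the same set, then at every
coordinate `i` where they differ, the block `W_{i,xᵢ}` is covered by the two other blocks of
`y`, and in a 2-basic system it puts one landmark in each. If `x` and `y` differ in exactly one
coordinate, these splittings form (F1); if they differ in all three, they form (F2); differing in
exactly two coordinates would force `x` itself to be a landmark.
-/

section PairSplitting

variable {V : Type*} {A D D' : Set V}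

lemma eq_pair_of_ncard_eq_two {s : Set V} {u v : V} (h : s.ncard = 2)
    (hu : u ∈ s) (hv : v ∈ s) (huv : u ≠ v) : s = {u, v} := by
  obtain ⟨a, b, hab, rfl⟩ := Set.ncard_eq_two.mp h
  rcases hu with rfl | rfl <;> rcases hv with rfl | rfl <;>
    first | exact absurd rfl huv | rfl | exact Set.pair_comm _ _

variable [Finite V]

lemma exists_eq_pair_of_subset_union (hA : A.ncard = 2) (hD : (A ∩ D).ncard ≤ 1)
    (hD' : (A ∩ D').ncard ≤ 1) (hcov : A ⊆ D ∪ D') :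
    ∃ p q, p ≠ q ∧ A = {p, q} ∧ p ∈ A ∩ D ∧ q ∈ A ∩ D' := by
  obtain ⟨a, b, hab, rfl⟩ := Set.ncard_eq_two.mp hA
  have ha : a ∈ ({a, b} : Set V) := Set.mem_insert a _
  have hb : b ∈ ({a, b} : Set V) := Set.mem_insert_of_mem a rfl
  rcases hcov ha with haD | haD' <;> rcases hcov hb with hbD | hbD'
  · exact absurd (Set.ncard_le_one_iff_subsingleton.mp hD ⟨ha, haD⟩ ⟨hb, hbD⟩) hab
  · exact ⟨a, b, hab, rfl, ⟨ha, haD⟩, ⟨hb, hbD'⟩⟩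
  · exact ⟨b, a, hab.symm, Set.pair_comm a b, ⟨hb, hbD⟩, ⟨ha, haD'⟩⟩
  · exact absurd (Set.ncard_le_one_iff_subsingleton.mp hD' ⟨ha, haD'⟩ ⟨hb, hbD'⟩) hab

lemma notMem_of_subset_union (hA : A.ncard = 2) (hD : (A ∩ D).ncard ≤ 1)
    (hD' : (A ∩ D').ncard ≤ 1) (hcov : A ⊆ D ∪ D') {u : V} (hu : u ∈ A) (huD : u ∈ D) :
    u ∉ D' := by
  intro huD'
  obtain ⟨p, q, hpq, rfl, hp, hq⟩ := exists_eq_pair_of_subset_union hA hD hD' hcov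
  rcases hu with rfl | rfl
  · exact hpq (Set.ncard_le_one_iff_subsingleton.mp hD' ⟨hp.1, huD'⟩ hq)
  · exact hpq (Set.ncard_le_one_iff_subsingleton.mp hD hp ⟨hq.1, huD⟩)

end PairSplitting

section Coordinates

variable {n : ℕ}

@[simp] lemma coord_zero (w : Fin n × Fin n × Fin n) : coord 0 w = w.1 := rfl
@[simp] lemma coord_one (w : Fin n × Fin n × Fin n) : coord 1 w = w.2.1 := rfl
@[simp] lemma coord_two (w : Fin n × Fin n × Fin n) : coord 2 w = w.2.2 := rfl

lemma Fin.eq_or_eq_or_eq_of_three {i j k : Fin 3} (hij : i ≠ j) (hik : i ≠ k) (hjk : j ≠ k)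
    (l : Fin 3) : l = i ∨ l = j ∨ l = k := by
  revert i j k l; decide

lemma eq_iff_forall_coord_eq {x y : Fin n × Fin n × Fin n} :
    x = y ↔ ∀ i, coord i x = coord i y := by
  simp [Fin.forall_fin_succ, Prod.ext_iff]

lemma forall_coord_ne_or_exists_perm {x y : Fin n × Fin n × Fin n} (hxy : x ≠ y) :
    (∀ i, coord i x ≠ coord i y) ∨
      ∃ σ : Equiv.Perm (Fin 3), coord (σ 0) x ≠ coord (σ 0) y ∧ coord (σ 2) x = coord (σ 2) y := by
  by_cases hall : ∀ i, coord i x ≠ coord i y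
  · exact Or.inl hall
  obtain ⟨k, hk⟩ := not_forall_not.mp hall
  obtain ⟨i, hi⟩ := not_forall.mp (mt eq_iff_forall_coord_eq.mpr hxy)
  have hperm : ∀ i k : Fin 3, i ≠ k → ∃ σ : Equiv.Perm (Fin 3), σ 0 = i ∧ σ 2 = k := by decide
  obtain ⟨σ, rfl, rfl⟩ := hperm i k (fun e => hi (e ▸ hk))
  exact Or.inr ⟨σ, hi, hk⟩

def ofCoords (g : Fin 3 → Fin n) : Fin n × Fin n × Fin n := (g 0, g 1, g 2)

@[simp] lemma coord_ofCoords (g : Fin 3 → Fin n) (i : Fin 3) : coord i (ofCoords g) = g i := by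
  fin_cases i <;> rfl

end Coordinates

namespace HG3

variable {n : ℕ} {x y w : Fin n × Fin n × Fin n}

lemma not_adj_iff : ¬ (HG3 n).Adj x w ↔ ∃ i, coord i x = coord i w := by
  simp [HG3, Fin.exists_fin_succ]; tauto

lemma dist_eq_two (hn : 3 ≤ n) (hxw : x ≠ w) (h : ¬ (HG3 n).Adj x w) : (HG3 n).dist x w = 2 := by
  obtain ⟨c₁, hc₁⟩ := Fin.exists_ne_and_ne_of_two_lt x.1 w.1 hn
  obtain ⟨c₂, hc₂⟩ := Fin.exists_ne_and_ne_of_two_lt x.2.1 w.2.1 hn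
  obtain ⟨c₃, hc₃⟩ := Fin.exists_ne_and_ne_of_two_lt x.2.2 w.2.2 hn
  have hcommon : (c₁, c₂, c₃) ∈ (HG3 n).commonNeighbors x w :=
    ⟨⟨hc₁.1.symm, hc₂.1.symm, hc₃.1.symm⟩, ⟨hc₁.2.symm, hc₂.2.symm, hc₃.2.symm⟩⟩
  rw [SimpleGraph.dist, SimpleGraph.edist_eq_two_iff.mpr ⟨hxw, h, _, hcommon⟩]
  rfl

lemma dist_eq_dist_iff (hn : 3 ≤ n) (hxw : x ≠ w) (hyw : y ≠ w) :
    (HG3 n).dist x w = (HG3 n).dist y w ↔ ((HG3 n).Adj x w ↔ (HG3 n).Adj y w) := by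
  by_cases hx : (HG3 n).Adj x w <;> by_cases hy : (HG3 n).Adj y w <;>
    simp [hx, hy, SimpleGraph.dist_eq_one_iff_adj.mpr, dist_eq_two hn, hxw, hyw]

end HG3

section SharedLandmarks

variable {n : ℕ} {W : Set (Fin n × Fin n × Fin n)} {x y w : Fin n × Fin n × Fin n}

/-- The landmarks sharing a coordinate with `x`. For `3 ≤ n` these are the landmarks at
distance `2` from a non-landmark `x`, all others being at distance `1`. -/
def sharedLandmarks (W : Set (Fin n × Fin n × Fin n)) (x : Fin n × Fin n × Fin n) :
    Set (Fin n × Fin n × Fin n) :=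
  ⋃ i, block W i (coord i x)

lemma mem_sharedLandmarks : w ∈ sharedLandmarks W x ↔ w ∈ W ∧ ¬ (HG3 n).Adj x w := by
  simp only [sharedLandmarks, Set.mem_iUnion, block, Set.mem_ofPred_eq, HG3.not_adj_iff,
    exists_and_left]
  exact and_congr_right fun _ => exists_congr fun _ => eq_comm

lemma sharedLandmarks_eq_iff (hn : 3 ≤ n) (hx : x ∉ W) (hy : y ∉ W) :
    sharedLandmarks W x = sharedLandmarks W y ↔ ∀ w ∈ W, (HG3 n).dist x w = (HG3 n).dist y w := by
  have hmem : ∀ w ∈ W, (w ∈ sharedLandmarks W x ↔ w ∈ sharedLandmarks W y) ↔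
      (HG3 n).dist x w = (HG3 n).dist y w := fun w hw => by
    rw [HG3.dist_eq_dist_iff hn (ne_of_mem_of_not_mem hw hx).symm
      (ne_of_mem_of_not_mem hw hy).symm, mem_sharedLandmarks, mem_sharedLandmarks]
    simp only [hw, true_and, not_iff_not]
  refine Set.ext_iff.trans ⟨fun h w hw => (hmem w hw).mp (h w), fun h w => ?_⟩
  by_cases hw : w ∈ W
  · exact (hmem w hw).mpr (h w hw)
  · simp [mem_sharedLandmarks, hw]

lemma isResolving_iff_injOn (hn : 3 ≤ n) :
    IsResolving W ↔ Set.InjOn (sharedLandmarks W) Wᶜ := by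
  constructor
  · intro h x hx y hy hxy
    by_contra hne
    obtain ⟨w, hw, hd⟩ := h x y hx hy hne
    exact hd ((sharedLandmarks_eq_iff hn hx hy).mp hxy w hw)
  · intro h x y hx hy hne
    by_contra! hd
    exact hne (h hx hy ((sharedLandmarks_eq_iff hn hx hy).mpr hd))

lemma sharedLandmarks_eq_union {i j k : Fin 3} (hij : i ≠ j) (hik : i ≠ k) (hjk : j ≠ k)
    (W : Set (Fin n × Fin n × Fin n)) (x : Fin n × Fin n × Fin n) :
    sharedLandmarks W x =
      block W i (coord i x) ∪ block W j (coord j x) ∪ block W k (coord k x) := by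
  ext w
  simp only [sharedLandmarks, Set.mem_iUnion, Set.mem_union]
  constructor
  · rintro ⟨l, hl⟩
    rcases Fin.eq_or_eq_or_eq_of_three hij hik hjk l with rfl | rfl | rfl <;> tauto
  · rintro ((h | h) | h) <;> exact ⟨_, h⟩

lemma block_subset_of_sharedLandmarks_eq (h : sharedLandmarks W x = sharedLandmarks W y)
    {i j k : Fin 3} (hij : i ≠ j) (hik : i ≠ k) (hjk : j ≠ k) (hi : coord i x ≠ coord i y) :
    block W i (coord i x) ⊆ block W j (coord j y) ∪ block W k (coord k y) := by
  intro w hw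
  have hw' : w ∈ sharedLandmarks W y := h ▸ Set.mem_iUnion_of_mem i hw
  rw [sharedLandmarks_eq_union hij hik hjk] at hw'
  rcases hw' with (hwi | hwj) | hwk
  · exact absurd (hw.2.symm.trans hwi.2) hi
  · exact Or.inl hwj
  · exact Or.inr hwk

end SharedLandmarks

section ForbiddenCycles

variable {n : ℕ} {W : Set (Fin n × Fin n × Fin n)}

lemma not_injOn_sharedLandmarks_of_hasF1 (hF : HasF1 W) :
    ¬ Set.InjOn (sharedLandmarks W) Wᶜ := by
  obtain ⟨σ, a, b, c, d, w₁, w₂, w₃, w₄, hab, hw, ha, hb, hc, hd⟩ := hF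
  simp only [List.pairwise_cons, List.mem_cons, List.not_mem_nil, forall_eq_or_imp,
    IsEmpty.forall_iff, implies_true, and_true, List.Pairwise.nil] at hw
  have h01 : σ 0 ≠ σ 1 := σ.injective.ne (by decide)
  have h02 : σ 0 ≠ σ 2 := σ.injective.ne (by decide)
  have h12 : σ 1 ≠ σ 2 := σ.injective.ne (by decide)
  let v : Fin n → Fin n × Fin n × Fin n := fun e => ofCoords (![e, c, d] ∘ σ.symm)
  have hv : ∀ e, sharedLandmarks W (v e) = block W (σ 0) e ∪ {w₂, w₃} ∪ {w₁, w₄} := by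
    intro e
    simp [sharedLandmarks_eq_union h01 h02 h12, v, ← hc, ← hd]
  have hv_notMem : ∀ e, block W (σ 0) e ⊆ {w₁, w₂} ∪ {w₃, w₄} → v e ∉ W := by
    intro e he hvW
    have h0 : v e ∈ block W (σ 0) e := ⟨hvW, by simp [v]⟩
    have h1 : v e ∈ block W (σ 1) c := ⟨hvW, by simp [v]⟩
    have h2 : v e ∈ block W (σ 2) d := ⟨hvW, by simp [v]⟩
    rw [hc] at h1; rw [hd] at h2
    have := he h0
    simp only [Set.mem_union, Set.mem_insert_iff, Set.mem_singleton_iff] at h1 h2 this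
    grind
  intro hinj
  have hvab := hinj (hv_notMem a (by rw [ha]; exact Set.subset_union_left))
    (hv_notMem b (by rw [hb]; exact Set.subset_union_right)) (by
      rw [hv, hv, ha, hb]; ext; simp only [Set.mem_union, Set.mem_insert_iff,
        Set.mem_singleton_iff]; tauto)
  exact hab (by simpa [v] using congrArg (coord (σ 0)) hvab)

lemma not_injOn_sharedLandmarks_of_hasF2 (hcard : ∀ i a, (block W i a).ncard = 2)
    (hF : HasF2 W) : ¬ Set.InjOn (sharedLandmarks W) Wᶜ := by
  obtain ⟨w₁, w₂, w₃, w₄, w₅, w₆, hw, m₁, m₂, m₃, m₄, m₅, m₆,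
    e₁₂, e₄₅, e₂₃, e₅₆, e₃₄, e₆₁, n₁₄, -, -⟩ := hF
  simp only [List.pairwise_cons, List.mem_cons, List.not_mem_nil, forall_eq_or_imp,
    IsEmpty.forall_iff, implies_true, and_true, List.Pairwise.nil] at hw
  have b₁₂ : block W 0 w₁.1 = {w₁, w₂} :=
    eq_pair_of_ncard_eq_two (hcard _ _) ⟨m₁, rfl⟩ ⟨m₂, e₁₂.symm⟩ hw.1.1
  have b₂₃ : block W 1 w₂.2.1 = {w₂, w₃} :=
    eq_pair_of_ncard_eq_two (hcard _ _) ⟨m₂, rfl⟩ ⟨m₃, e₂₃.symm⟩ hw.2.1.1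
  have b₃₄ : block W 2 w₃.2.2 = {w₃, w₄} :=
    eq_pair_of_ncard_eq_two (hcard _ _) ⟨m₃, rfl⟩ ⟨m₄, e₃₄.symm⟩ hw.2.2.1.1
  have b₄₅ : block W 0 w₄.1 = {w₄, w₅} :=
    eq_pair_of_ncard_eq_two (hcard _ _) ⟨m₄, rfl⟩ ⟨m₅, e₄₅.symm⟩ hw.2.2.2.1.1
  have b₅₆ : block W 1 w₅.2.1 = {w₅, w₆} :=
    eq_pair_of_ncard_eq_two (hcard _ _) ⟨m₅, rfl⟩ ⟨m₆, e₅₆.symm⟩ hw.2.2.2.2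
  have b₆₁ : block W 2 w₆.2.2 = {w₆, w₁} :=
    eq_pair_of_ncard_eq_two (hcard _ _) ⟨m₆, rfl⟩ ⟨m₁, e₆₁.symm⟩ (Ne.symm hw.1.2.2.2.2)
  have hunion : ∀ v : Fin n × Fin n × Fin n,
      sharedLandmarks W v = block W 0 v.1 ∪ block W 1 v.2.1 ∪ block W 2 v.2.2 :=
    sharedLandmarks_eq_union (by decide) (by decide) (by decide) W
  have hx : (w₁.1, w₅.2.1, w₃.2.2) ∉ W := fun hxW => by
    have h₀ : (w₁.1, w₅.2.1, w₃.2.2) ∈ block W 0 w₁.1 := ⟨hxW, rfl⟩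
    have h₁ : (w₁.1, w₅.2.1, w₃.2.2) ∈ block W 1 w₅.2.1 := ⟨hxW, rfl⟩
    rw [b₁₂] at h₀; rw [b₅₆] at h₁
    simp only [Set.mem_insert_iff, Set.mem_singleton_iff] at h₀ h₁
    grind
  have hy : (w₄.1, w₂.2.1, w₆.2.2) ∉ W := fun hyW => by
    have h₀ : (w₄.1, w₂.2.1, w₆.2.2) ∈ block W 0 w₄.1 := ⟨hyW, rfl⟩
    have h₁ : (w₄.1, w₂.2.1, w₆.2.2) ∈ block W 1 w₂.2.1 := ⟨hyW, rfl⟩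
    rw [b₄₅] at h₀; rw [b₂₃] at h₁
    simp only [Set.mem_insert_iff, Set.mem_singleton_iff] at h₀ h₁
    grind
  intro hinj
  have hxy := hinj hx hy (by
    rw [hunion, hunion]
    simp only [b₁₂, b₂₃, b₃₄, b₄₅, b₅₆, b₆₁]
    ext; simp only [Set.mem_union, Set.mem_insert_iff, Set.mem_singleton_iff]; tauto)
  exact n₁₄ (Prod.mk.inj hxy).1

end ForbiddenCycles

namespace TwoBasic

variable {n : ℕ} {W : Set (Fin n × Fin n × Fin n)} {i j k : Fin 3} {a b c d : Fin n}

lemma ncard_block_inter_le (hW : TwoBasic W) (hij : i ≠ j) (a b : Fin n) :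
    (block W i a ∩ block W j b).ncard ≤ 1 := by
  rcases hij.lt_or_gt with h | h
  · exact hW.2 i j h a b
  · rw [Set.inter_comm]; exact hW.2 j i h b a

lemma exists_eq_pair_of_block_subset (hW : TwoBasic W) (hij : i ≠ j) (hik : i ≠ k)
    (h : block W i a ⊆ block W j b ∪ block W k c) :
    ∃ p q, p ≠ q ∧ block W i a = {p, q} ∧
      p ∈ block W i a ∩ block W j b ∧ q ∈ block W i a ∩ block W k c :=
  exists_eq_pair_of_subset_union (hW.1 i a) (hW.ncard_block_inter_le hij a b)
    (hW.ncard_block_inter_le hik a c) h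

lemma notMem_of_block_subset (hW : TwoBasic W) (hij : i ≠ j) (hik : i ≠ k)
    (h : block W i a ⊆ block W j b ∪ block W k c) {w : Fin n × Fin n × Fin n}
    (hwi : w ∈ block W i a) (hwj : w ∈ block W j b) : w ∉ block W k c :=
  notMem_of_subset_union (hW.1 i a) (hW.ncard_block_inter_le hij a b)
    (hW.ncard_block_inter_le hik a c) h hwi hwj

lemma hasF1_of_block_subset (hW : TwoBasic W) (σ : Equiv.Perm (Fin 3)) (hab : a ≠ b)
    (ha : block W (σ 0) a ⊆ block W (σ 1) c ∪ block W (σ 2) d)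
    (hb : block W (σ 0) b ⊆ block W (σ 1) c ∪ block W (σ 2) d) : HasF1 W := by
  have h01 : σ 0 ≠ σ 1 := σ.injective.ne (by decide)
  have h02 : σ 0 ≠ σ 2 := σ.injective.ne (by decide)
  obtain ⟨w₂, w₁, h₂₁, hwa, hw₂, hw₁⟩ := hW.exists_eq_pair_of_block_subset h01 h02 ha
  obtain ⟨w₃, w₄, h₃₄, hwb, hw₃, hw₄⟩ := hW.exists_eq_pair_of_block_subset h01 h02 hb
  have hcross : ∀ u ∈ block W (σ 0) a, ∀ v ∈ block W (σ 0) b, u ≠ v := by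
    rintro u hu v hv rfl
    exact hab (hu.2.symm.trans hv.2)
  rw [hwa] at hcross; rw [hwb] at hcross
  simp only [Set.mem_insert_iff, Set.mem_singleton_iff, forall_eq_or_imp, forall_eq] at hcross
  refine ⟨σ, a, b, c, d, w₁, w₂, w₃, w₄, hab, ?_, hwa.trans (Set.pair_comm _ _), hwb,
    eq_pair_of_ncard_eq_two (hW.1 _ _) hw₂.2 hw₃.2 hcross.1.1,
    eq_pair_of_ncard_eq_two (hW.1 _ _) hw₁.2 hw₄.2 hcross.2.2⟩
  simp only [List.pairwise_cons, List.mem_cons, List.not_mem_nil, forall_eq_or_imp,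
    IsEmpty.forall_iff, implies_true, and_true, List.Pairwise.nil]
  grind

lemma coord_eq_of_sharedLandmarks_eq (hW : TwoBasic W) {x y : Fin n × Fin n × Fin n}
    (hx : x ∉ W) (h : sharedLandmarks W x = sharedLandmarks W y)
    (hij : i ≠ j) (hik : i ≠ k) (hjk : j ≠ k)
    (hi : coord i x ≠ coord i y) (hk : coord k x = coord k y) : coord j x = coord j y := by
  by_contra hj
  have hxi := block_subset_of_sharedLandmarks_eq h hij hik hjk hi
  have hyi := block_subset_of_sharedLandmarks_eq h.symm hij hik hjk (Ne.symm hi)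
  have hxj := block_subset_of_sharedLandmarks_eq h hij.symm hjk hik hj
  rw [← hk] at hxi hxj
  obtain ⟨-, q, -, -, -, hqi, hqk⟩ := hW.exists_eq_pair_of_block_subset hij hik hxi
  obtain ⟨-, q', -, -, -, hq'i, hq'k⟩ := hW.exists_eq_pair_of_block_subset hij hik hyi
  obtain ⟨-, q'', -, -, -, hq''j, hq''k⟩ := hW.exists_eq_pair_of_block_subset hij.symm hjk hxj
  have hqq' : q ≠ q' := fun e => hi (hqi.2.symm.trans (e ▸ hq'i.2))
  -- the two landmarks of the `k`-block are `q` and `q'`, and `q''` can be neither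
  rcases eq_pair_of_ncard_eq_two (hW.1 k _) hqk hq'k hqq' ▸ hq''k with e | e
  · rw [e] at hq''j
    have hqx : q = x := eq_iff_forall_coord_eq.mpr fun l => by
      rcases Fin.eq_or_eq_or_eq_of_three hij hik hjk l with rfl | rfl | rfl
      exacts [hqi.2, hq''j.2, hqk.2]
    exact hx (hqx ▸ hqi.1)
  · rw [e] at hq''j
    exact hW.notMem_of_block_subset hij.symm hjk hxj hq''j hq'i hq'k

lemma hasF2_of_block_subset (hW : TwoBasic W) {a a' b b' c c' : Fin n}
    (ha : a ≠ a') (hb : b ≠ b') (hc : c ≠ c')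
    (h₀ : block W 0 a ⊆ block W 1 b' ∪ block W 2 c')
    (h₁ : block W 1 b ⊆ block W 0 a' ∪ block W 2 c')
    (h₂ : block W 2 c ⊆ block W 0 a' ∪ block W 1 b')
    (h₀' : block W 0 a' ⊆ block W 1 b ∪ block W 2 c)
    (h₁' : block W 1 b' ⊆ block W 0 a ∪ block W 2 c)
    (h₂' : block W 2 c' ⊆ block W 0 a ∪ block W 1 b) : HasF2 W := by
  obtain ⟨w₂, w₁, h₂₁, -, hw₂, hw₁⟩ :=
    hW.exists_eq_pair_of_block_subset (by decide) (by decide) h₀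
  obtain ⟨w₅, w₆, h₅₆, -, hw₅, hw₆⟩ :=
    hW.exists_eq_pair_of_block_subset (by decide) (by decide) h₁
  obtain ⟨w₄, w₃, h₄₃, -, hw₄, hw₃⟩ :=
    hW.exists_eq_pair_of_block_subset (by decide) (by decide) h₂
  have h₁₆ : w₁ ≠ w₆ := fun e =>
    hW.notMem_of_block_subset (by decide) (by decide) h₂' hw₁.2 hw₁.1 (e ▸ hw₆.1)
  have h₂₃ : w₂ ≠ w₃ := fun e =>
    hW.notMem_of_block_subset (by decide) (by decide) h₁' hw₂.2 hw₂.1 (e ▸ hw₃.1)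
  have h₅₄ : w₅ ≠ w₄ := fun e =>
    hW.notMem_of_block_subset (by decide) (by decide) h₀' hw₅.2 hw₅.1 (e ▸ hw₄.1)
  have c₁ : w₁.1 = a ∧ w₁.2.2 = c' := ⟨hw₁.1.2, hw₁.2.2⟩
  have c₂ : w₂.1 = a ∧ w₂.2.1 = b' := ⟨hw₂.1.2, hw₂.2.2⟩
  have c₃ : w₃.2.1 = b' ∧ w₃.2.2 = c := ⟨hw₃.2.2, hw₃.1.2⟩
  have c₄ : w₄.1 = a' ∧ w₄.2.2 = c := ⟨hw₄.2.2, hw₄.1.2⟩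
  have c₅ : w₅.1 = a' ∧ w₅.2.1 = b := ⟨hw₅.2.2, hw₅.1.2⟩
  have c₆ : w₆.2.1 = b ∧ w₆.2.2 = c' := ⟨hw₆.1.2, hw₆.2.2⟩
  refine ⟨w₁, w₂, w₃, w₄, w₅, w₆, ?_, hw₁.1.1, hw₂.1.1, hw₃.1.1, hw₄.1.1, hw₅.1.1, hw₆.1.1, ?_⟩
  · simp only [List.pairwise_cons, List.mem_cons, List.not_mem_nil, forall_eq_or_imp,
      IsEmpty.forall_iff, implies_true, and_true, List.Pairwise.nil]
    grind
  · grind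

lemma hasF2_of_sharedLandmarks_eq (hW : TwoBasic W) {x y : Fin n × Fin n × Fin n}
    (h : sharedLandmarks W x = sharedLandmarks W y) (hne : ∀ i, coord i x ≠ coord i y) :
    HasF2 W :=
  hW.hasF2_of_block_subset (hne 0) (hne 1) (hne 2)
    (block_subset_of_sharedLandmarks_eq h (by decide) (by decide) (by decide) (hne _))
    (block_subset_of_sharedLandmarks_eq h (by decide) (by decide) (by decide) (hne _))
    (block_subset_of_sharedLandmarks_eq h (by decide) (by decide) (by decide) (hne _))
    (block_subset_of_sharedLandmarks_eq h.symm (by decide) (by decide) (by decide) (hne _).symm)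
    (block_subset_of_sharedLandmarks_eq h.symm (by decide) (by decide) (by decide) (hne _).symm)
    (block_subset_of_sharedLandmarks_eq h.symm (by decide) (by decide) (by decide) (hne _).symm)

lemma hasF1_or_hasF2_of_not_injOn (hW : TwoBasic W)
    (h : ¬ Set.InjOn (sharedLandmarks W) Wᶜ) : HasF1 W ∨ HasF2 W := by
  obtain ⟨x, hx, y, -, hxy, hne⟩ : ∃ x ∈ Wᶜ, ∃ y ∈ Wᶜ,
      sharedLandmarks W x = sharedLandmarks W y ∧ x ≠ y := by
    simpa [Set.InjOn] using h
  rcases forall_coord_ne_or_exists_perm hne with hall | ⟨σ, h₀, h₂⟩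
  · exact Or.inr (hW.hasF2_of_sharedLandmarks_eq hxy hall)
  have h01 : σ 0 ≠ σ 1 := σ.injective.ne (by decide)
  have h02 : σ 0 ≠ σ 2 := σ.injective.ne (by decide)
  have h12 : σ 1 ≠ σ 2 := σ.injective.ne (by decide)
  have h₁ := hW.coord_eq_of_sharedLandmarks_eq hx hxy h01 h02 h12 h₀ h₂
  refine Or.inl (hW.hasF1_of_block_subset σ h₀
    (block_subset_of_sharedLandmarks_eq hxy h01 h02 h12 h₀) ?_)
  rw [← h₁, ← h₂]
  exact block_subset_of_sharedLandmarks_eq hxy.symm h01 h02 h12 (Ne.symm h₀)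

end TwoBasic

theorem stmt8 (n : ℕ) (hn : 3 ≤ n) (W : Set (Fin n × Fin n × Fin n))
    (hW : TwoBasic W) :
    IsResolving W ↔ ¬ HasF1 W ∧ ¬ HasF2 W := by
  rw [isResolving_iff_injOn hn]
  refine ⟨fun hinj => ⟨fun hF => not_injOn_sharedLandmarks_of_hasF1 hF hinj,
    fun hF => not_injOn_sharedLandmarks_of_hasF2 hW.1 hF hinj⟩, fun ⟨hF1, hF2⟩ => ?_⟩
  by_contra hinj
  exact (hW.hasF1_or_hasF2_of_not_injOn hinj).elim hF1 hF2
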